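/- The set $S_{\mathrm{rep}}$ of representable triples is incurved: there exist no $q \in [0,1]$ and $s, s' \in \mathbb{R}_{\geq 0}^3 \setminus S_{\mathrm{rep}}$ such that $q s + (1-q) s' \in S_{\mathrm{rep}}$. -/

import Mathlib

def Representable (a b c : ℝ) : Prop :=
  ∃ a1 a2 b1 b3 c2 c3 : ℝ,
    a1 ∈ Set.Icc (0:ℝ) 2 ∧ a2 ∈ Set.Icc (0:ℝ) 2 ∧ b1 ∈ Set.Icc (0:ℝ) 2 ∧
    b3 ∈ Set.Icc (0:ℝ) 2 ∧ c2 ∈ Set.Icc (0:ℝ) 2 ∧ c3 ∈ Set.Icc (0:ℝ) 2 ∧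
    a1 * a2 = a ∧ b1 * b3 = b ∧ c2 * c3 = c ∧
    a1 + b1 ≤ 2 ∧ a2 + c2 ≤ 2 ∧ b3 + c3 ≤ 2

def Nonneg3 (s : ℝ × ℝ × ℝ) : Prop := 0 ≤ s.1 ∧ 0 ≤ s.2.1 ∧ 0 ≤ s.2.2

def SRep : Set (ℝ × ℝ × ℝ) := {s | Representable s.1 s.2.1 s.2.2}

/-!
Since `f(a, b) = ((√((4 - a)(4 - b)) - √(ab)) / 2)²`, the condition `c ≤ f(a, b)` reads
`2√c + √(ab) ≤ √((4 - a)(4 - b))`; for representable triples this is Cauchy–Schwarz, and an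
explicit witness realises every triple satisfying it. Convexity of `f` on `[0, 4]²` is a weighted
Cauchy–Schwarz inequality for `√(a(4 - a) b(4 - b))`.

A triple outside `S_rep` either lies strictly above the graph of `f` or has `a + b > 4`. If both
endpoints lie strictly above the graph, convexity keeps the combination strictly above it. If
`s` has `a + b > 4`, the segment from `s'` to `s` leaves the triangle `a + b ≤ 4` at a point `T`
where `f` vanishes; a combination inside the triangle lies between `s'` and `T`, so convexity
bounds `f` there by `(1 - q) f(s') < (1 - q) c'`, which is at most its third coordinate.
-/

open Real Set

variable {q a b c a' b' c' : ℝ}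

noncomputable def repBound (a b : ℝ) : ℝ :=
  4 + (a * b - 2 * a - 2 * b - √(a * b * (4 - a) * (4 - b))) / 2

theorem repBound_eq_sq (hab : 0 ≤ a * b) (h4 : 0 ≤ (4 - a) * (4 - b)) :
    repBound a b = ((√((4 - a) * (4 - b)) - √(a * b)) / 2) ^ 2 := by
  have hprod : √((4 - a) * (4 - b)) * √(a * b) = √(a * b * (4 - a) * (4 - b)) := by
    rw [← sqrt_mul h4]; ring_nf
  unfold repBound
  linear_combination (-(1 : ℝ) / 4) * sq_sqrt h4 - (1 / 4) * sq_sqrt hab + (1 / 2) * hprod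

theorem repBound_nonneg (hab : 0 ≤ a * b) (h4 : 0 ≤ (4 - a) * (4 - b)) : 0 ≤ repBound a b := by
  rw [repBound_eq_sq hab h4]; positivity

theorem repBound_eq_zero_of_add_eq_four (hab : 0 ≤ a * b) (h : a + b = 4) :
    repBound a b = 0 := by
  have h4 : (4 - a) * (4 - b) = a * b := by rw [← h]; ring
  rw [repBound_eq_sq hab (h4 ▸ hab), h4]; ring

theorem le_repBound_iff (ha : 0 ≤ a) (hb : 0 ≤ b) (hab : a + b ≤ 4) :
    c ≤ repBound a b ↔ 2 * √c + √(a * b) ≤ √((4 - a) * (4 - b)) := by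
  have hD : √(a * b) ≤ √((4 - a) * (4 - b)) := sqrt_le_sqrt (by nlinarith)
  rw [repBound_eq_sq (by positivity) (by nlinarith), ← sqrt_le_left (by linarith)]
  constructor <;> intro h <;> linarith

theorem sqrt_mul_add_sqrt_mul_le {p₁ p₂ q₁ q₂ : ℝ} (hp₁ : 0 ≤ p₁) (hp₂ : 0 ≤ p₂) (hq₁ : 0 ≤ q₁)
    (hq₂ : 0 ≤ q₂) : √(p₁ * q₁) + √(p₂ * q₂) ≤ √((p₁ + p₂) * (q₁ + q₂)) := by
  have := sum_sqrt_mul_sqrt_le Finset.univ (f := ![p₁, p₂]) (g := ![q₁, q₂])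
    (by simp [Fin.forall_fin_two, *]) (by simp [Fin.forall_fin_two, *])
  simp only [Fin.sum_univ_two, Matrix.cons_val_zero, Matrix.cons_val_one] at this
  rwa [sqrt_mul hp₁, sqrt_mul hp₂, sqrt_mul (add_nonneg hp₁ hp₂)]

theorem Representable.add_le_four (h : Representable a b c) : a + b ≤ 4 := by
  obtain ⟨a1, a2, b1, b3, -, -, ⟨ha1, -⟩, ⟨-, ha2⟩, ⟨hb1, -⟩, ⟨-, hb3⟩, -, -,
    rfl, rfl, -, hab, -, -⟩ := h
  nlinarith

theorem Representable.le_repBound (h : Representable a b c) : c ≤ repBound a b := by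
  have hab4 := h.add_le_four
  obtain ⟨a1, a2, b1, b3, c2, c3, ⟨ha1, -⟩, ⟨ha2, -⟩, ⟨hb1, -⟩, ⟨hb3, -⟩, ⟨hc2, -⟩,
    ⟨hc3, -⟩, rfl, rfl, rfl, hab, hac, hbc⟩ := h
  rw [le_repBound_iff (by positivity) (by positivity) hab4]
  -- `4 - a1 a2 ≥ 2 (2 - a2) + a2 b1` and likewise for `b`, then Cauchy–Schwarz
  calc 2 * √(c2 * c3) + √(a1 * a2 * (b1 * b3))
      = √((2 * c2) * (2 * c3)) + √((a2 * b1) * (b3 * a1)) := by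
        rw [show 2 * c2 * (2 * c3) = 2 ^ 2 * (c2 * c3) by ring,
          sqrt_mul' (2 ^ 2) (by positivity), sqrt_sq zero_le_two,
          show a2 * b1 * (b3 * a1) = a1 * a2 * (b1 * b3) by ring]
    _ ≤ √((2 * (2 - a2)) * (2 * (2 - b3))) + √((a2 * b1) * (b3 * a1)) := by
        gcongr <;> linarith
    _ ≤ √((2 * (2 - a2) + a2 * b1) * (2 * (2 - b3) + b3 * a1)) :=
        sqrt_mul_add_sqrt_mul_le (by linarith) (by positivity) (by linarith) (by positivity)
    _ ≤ √((4 - a1 * a2) * (4 - b1 * b3)) := by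
        gcongr <;> nlinarith

theorem representable_mul_of_nonneg {a1 a2 b1 b3 c2 c3 : ℝ} (ha1 : 0 ≤ a1) (ha2 : 0 ≤ a2)
    (hb1 : 0 ≤ b1) (hb3 : 0 ≤ b3) (hc2 : 0 ≤ c2) (hc3 : 0 ≤ c3) (hab : a1 + b1 ≤ 2)
    (hac : a2 + c2 ≤ 2) (hbc : b3 + c3 ≤ 2) : Representable (a1 * a2) (b1 * b3) (c2 * c3) :=
  ⟨a1, a2, b1, b3, c2, c3, ⟨ha1, by linarith⟩, ⟨ha2, by linarith⟩, ⟨hb1, by linarith⟩,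
    ⟨hb3, by linarith⟩, ⟨hc2, by linarith⟩, ⟨hc3, by linarith⟩, rfl, rfl, rfl, hab, hac, hbc⟩

theorem representable_sq_of_pos {x y z w s : ℝ} (hx : 0 ≤ x) (hy : 0 ≤ y) (hz : 0 < z)
    (hw : 0 < w) (hs : 0 ≤ s) (hσ : 0 < x * w + y * z) (hxz : x ^ 2 + z ^ 2 = 4)
    (hyw : y ^ 2 + w ^ 2 = 4) (h : 2 * s + x * y ≤ z * w) :
    Representable (x ^ 2) (y ^ 2) (s ^ 2) := by
  set σ := x * w + y * z
  -- equality case of `Representable.le_repBound`: `a1 + b1 = 2`, and `a2 + c2 = 2` when `c` is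
  -- maximal
  have key := representable_mul_of_nonneg (a1 := 2 * x * w / σ) (a2 := x * σ / (2 * w))
    (b1 := 2 * y * z / σ) (b3 := y * σ / (2 * z)) (c2 := s * z / w) (c3 := s * w / z)
    (by positivity) (by positivity) (by positivity) (by positivity) (by positivity)
    (by positivity) (by rw [← add_div, div_le_iff₀ hσ]; linarith)
    (by
      rw [show x * σ / (2 * w) + s * z / w = (x * σ + 2 * s * z) / (2 * w) by field_simp,
        div_le_iff₀ (by positivity)]
      nlinarith [mul_le_mul_of_nonneg_left h hz.le])
    (by
      rw [show y * σ / (2 * z) + s * w / z = (y * σ + 2 * s * w) / (2 * z) by field_simp,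
        div_le_iff₀ (by positivity)]
      nlinarith [mul_le_mul_of_nonneg_left h hw.le])
  convert key using 1 <;> field_simp

/-- `x, y, z, w, s` stand for `√a, √b, √(4 - a), √(4 - b), √c`. -/
theorem representable_sq {x y z w s : ℝ} (hx : 0 ≤ x) (hy : 0 ≤ y) (hz : 0 ≤ z) (hw : 0 ≤ w)
    (hs : 0 ≤ s) (hxz : x ^ 2 + z ^ 2 = 4) (hyw : y ^ 2 + w ^ 2 = 4)
    (h : 2 * s + x * y ≤ z * w) : Representable (x ^ 2) (y ^ 2) (s ^ 2) := by
  rcases hz.eq_or_lt with rfl | hz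
  · obtain rfl : s = 0 := by nlinarith [mul_nonneg hx hy]
    obtain rfl : y = 0 := by nlinarith [mul_nonneg hx hy]
    exact ⟨2, 2, 0, 0, 0, 0, by norm_num; linarith⟩
  rcases hw.eq_or_lt with rfl | hw
  · obtain rfl : s = 0 := by nlinarith [mul_nonneg hx hy]
    obtain rfl : x = 0 := by nlinarith [mul_nonneg hx hy]
    exact ⟨0, 0, 2, 2, 0, 0, by norm_num; linarith⟩
  rcases (add_nonneg (mul_nonneg hx hw.le) (mul_nonneg hy hz.le)).eq_or_lt with hσ | hσ
  · obtain rfl : x = 0 := by nlinarith [mul_nonneg hx hw.le, mul_nonneg hy hz.le]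
    obtain rfl : y = 0 := by nlinarith [mul_nonneg hx hw.le, mul_nonneg hy hz.le]
    norm_num at hxz hyw h
    have hs2 : s ≤ 2 := by nlinarith [sq_nonneg (z - w)]
    exact ⟨0, 0, 0, 0, s, s, by norm_num [hs, hs2, sq]⟩
  exact representable_sq_of_pos hx hy hz hw hs hσ hxz hyw h

theorem representable_of_le_repBound (ha : 0 ≤ a) (hb : 0 ≤ b) (hc : 0 ≤ c) (hab : a + b ≤ 4)
    (h : c ≤ repBound a b) : Representable a b c := by
  rw [le_repBound_iff ha hb hab, sqrt_mul ha, sqrt_mul (by linarith)] at h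
  have hsq {t : ℝ} (ht : 0 ≤ t) (ht4 : t ≤ 4) : √t ^ 2 + √(4 - t) ^ 2 = 4 := by
    rw [sq_sqrt ht, sq_sqrt (by linarith)]; ring
  simpa only [sq_sqrt ha, sq_sqrt hb, sq_sqrt hc] using
    representable_sq (sqrt_nonneg a) (sqrt_nonneg b) (sqrt_nonneg _) (sqrt_nonneg _)
      (sqrt_nonneg c) (hsq ha (by linarith)) (hsq hb (by linarith)) h

theorem repBound_lt_of_not_representable (ha : 0 ≤ a) (hb : 0 ≤ b) (hc : 0 ≤ c)
    (hab : a + b ≤ 4) (h : ¬ Representable a b c) : repBound a b < c :=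
  lt_of_not_ge fun hle ↦ h (representable_of_le_repBound ha hb hc hab hle)

theorem convexOn_repBound : ConvexOn ℝ (Icc 0 4 ×ˢ Icc 0 4) (Function.uncurry repBound) := by
  refine ⟨(convex_Icc 0 4).prod (convex_Icc 0 4), ?_⟩
  rintro ⟨a, b⟩ ⟨⟨ha, ha4⟩, hb, hb4⟩ ⟨a', b'⟩ ⟨⟨ha', ha4'⟩, hb', hb4'⟩ p q hp hq hpq
  obtain rfl : q = 1 - p := by linarith
  simp only [Prod.smul_mk, Prod.mk_add_mk, smul_eq_mul, Function.uncurry_apply_pair]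
  set A := p * a + (1 - p) * a'
  set B := p * b + (1 - p) * b'
  have hsq {x y : ℝ} (hx : 0 ≤ x) (hx4 : x ≤ 4) (hy : 0 ≤ y) (hy4 : y ≤ 4) (t : ℝ) :
      (t * √(x * (4 - x) * (y * (4 - y)))) ^ 2 = (t * (x * (4 - x))) * (t * (y * (4 - y))) := by
    rw [mul_pow, sq_sqrt (mul_nonneg (mul_nonneg hx (by linarith)) (mul_nonneg hy (by linarith)))]
    ring
  -- weighted Cauchy–Schwarz, using `A (4 - A) = p a (4 - a) + q a' (4 - a') + p q (a - a')²`
  have hCS := Finset.sum_sq_le_sum_mul_sum_of_sq_le_mul Finset.univ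
    (r := ![p * √(a * (4 - a) * (b * (4 - b))), (1 - p) * √(a' * (4 - a') * (b' * (4 - b'))),
      p * (1 - p) * (a - a') * (b' - b)])
    (f := ![p * (a * (4 - a)), (1 - p) * (a' * (4 - a')), p * (1 - p) * (a - a') ^ 2])
    (g := ![p * (b * (4 - b)), (1 - p) * (b' * (4 - b')), p * (1 - p) * (b - b') ^ 2])
    (by simp [Fin.forall_fin_succ]; refine ⟨?_, ?_, ?_⟩ <;> positivity)
    (by simp [Fin.forall_fin_succ]; refine ⟨?_, ?_, ?_⟩ <;> positivity)
    (by
      simp only [Finset.mem_univ, forall_const, Fin.forall_fin_succ, Matrix.cons_val_zero,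
        Matrix.cons_val_succ, IsEmpty.forall_iff, and_true]
      exact ⟨(hsq ha ha4 hb hb4 p).le, (hsq ha' ha4' hb' hb4' _).le, le_of_eq (by ring)⟩)
  simp only [Fin.sum_univ_three, Matrix.cons_val] at hCS
  rw [show p * (a * (4 - a)) + (1 - p) * (a' * (4 - a')) + p * (1 - p) * (a - a') ^ 2
      = A * (4 - A) by ring,
    show p * (b * (4 - b)) + (1 - p) * (b' * (4 - b')) + p * (1 - p) * (b - b') ^ 2
      = B * (4 - B) by ring] at hCS
  have hrad (x y : ℝ) : x * y * (4 - x) * (4 - y) = x * (4 - x) * (y * (4 - y)) := by ring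
  simp only [repBound, hrad]
  linear_combination (1 / 2) * le_sqrt_of_sq_le hCS

theorem repBound_convexComb_le (hq0 : 0 ≤ q) (hq1 : q ≤ 1) (ha : a ∈ Icc 0 4)
    (hb : b ∈ Icc 0 4) (ha' : a' ∈ Icc 0 4) (hb' : b' ∈ Icc 0 4) :
    repBound (q * a + (1 - q) * a') (q * b + (1 - q) * b') ≤
      q * repBound a b + (1 - q) * repBound a' b' := by
  simpa using convexOn_repBound.2 (mk_mem_prod ha hb) (mk_mem_prod ha' hb') hq0
    (sub_nonneg.2 hq1) (add_sub_cancel q 1)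

theorem not_representable_convexComb_of_add_le_four (hq0 : 0 < q) (hq1 : q ≤ 1) (ha : 0 ≤ a)
    (hb : 0 ≤ b) (hc : 0 ≤ c) (ha' : 0 ≤ a') (hb' : 0 ≤ b') (hc' : 0 ≤ c') (hab : a + b ≤ 4)
    (hab' : a' + b' ≤ 4) (h : ¬ Representable a b c) (h' : ¬ Representable a' b' c') :
    ¬ Representable (q * a + (1 - q) * a') (q * b + (1 - q) * b') (q * c + (1 - q) * c') := by
  intro hM
  have hf := repBound_lt_of_not_representable ha hb hc hab h
  have hf' := repBound_lt_of_not_representable ha' hb' hc' hab' h'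
  have hconv := repBound_convexComb_le hq0.le hq1 ⟨ha, by linarith⟩ ⟨hb, by linarith⟩
    ⟨ha', by linarith⟩ ⟨hb', by linarith⟩
  nlinarith [hM.le_repBound, mul_lt_mul_of_pos_left hf hq0,
    mul_le_mul_of_nonneg_left hf'.le (sub_nonneg.2 hq1)]

theorem not_representable_convexComb_of_four_lt (hq0 : 0 < q) (hq1 : q ≤ 1) (ha : 0 ≤ a)
    (hb : 0 ≤ b) (hc : 0 ≤ c) (ha' : 0 ≤ a') (hb' : 0 ≤ b') (hc' : 0 ≤ c') (hab : 4 < a + b)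
    (h' : ¬ Representable a' b' c') :
    ¬ Representable (q * a + (1 - q) * a') (q * b + (1 - q) * b') (q * c + (1 - q) * c') := by
  intro hM
  have hAB := hM.add_le_four
  have hab' : a' + b' < 4 := by nlinarith
  have hd : 0 < a + b - (a' + b') := by linarith
  -- the segment from `(a', b')` to `(a, b)` leaves the triangle `a + b ≤ 4` at parameter `t`
  set t := (4 - (a' + b')) / (a + b - (a' + b'))
  have hqt : q ≤ t := by rw [le_div_iff₀ hd]; linarith
  have ht1 : t < 1 := by rw [div_lt_one hd]; linarith
  have ht0 : 0 < t := hq0.trans_le hqt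
  have hTsum : t * a + (1 - t) * a' + (t * b + (1 - t) * b') = 4 := by
    linear_combination div_mul_cancel₀ (4 - (a' + b')) hd.ne'
  have hTa : 0 ≤ t * a + (1 - t) * a' := by nlinarith
  have hTb : 0 ≤ t * b + (1 - t) * b' := by nlinarith
  have hT := repBound_eq_zero_of_add_eq_four (mul_nonneg hTa hTb) hTsum
  -- the combination is the point at parameter `q / t` of the segment from `(a', b')` to `T`
  have hν : q / t * t = q := div_mul_cancel₀ q ht0.ne'
  have hconv := repBound_convexComb_le (div_nonneg hq0.le ht0.le) (div_le_one_of_le₀ hqt ht0.le)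
    ⟨hTa, by linarith⟩ ⟨hTb, by linarith⟩ ⟨ha', by linarith⟩ ⟨hb', by linarith⟩
  rw [hT, show q / t * (t * a + (1 - t) * a') + (1 - q / t) * a' = q * a + (1 - q) * a' by
      linear_combination (a - a') * hν,
    show q / t * (t * b + (1 - t) * b') + (1 - q / t) * b' = q * b + (1 - q) * b' by
      linear_combination (b - b') * hν] at hconv
  have hf' := repBound_lt_of_not_representable ha' hb' hc' hab'.le h'
  have hf'0 : 0 ≤ repBound a' b' := repBound_nonneg (by positivity) (by nlinarith)
  nlinarith [hM.le_repBound, le_div_self hq0.le ht0 ht1.le,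
    mul_lt_mul_of_pos_left hf' (sub_pos.2 (hqt.trans_lt ht1))]

theorem stmt_15 :
    ¬ ∃ q ∈ Set.Icc (0:ℝ) 1, ∃ s s' : ℝ × ℝ × ℝ,
        Nonneg3 s ∧ s ∉ SRep ∧ Nonneg3 s' ∧ s' ∉ SRep ∧
        q • s + (1 - q) • s' ∈ SRep := by
  rintro ⟨q, ⟨hq0, hq1⟩, ⟨a, b, c⟩, ⟨a', b', c'⟩, ⟨ha, hb, hc⟩, hs, ⟨ha', hb', hc'⟩, hs', hM⟩
  simp only [SRep, mem_ofPred_eq, Prod.smul_mk, Prod.mk_add_mk, smul_eq_mul] at hs hs' hM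
  rcases hq0.eq_or_lt with rfl | hq0
  · exact hs' (by simpa using hM)
  rcases hq1.eq_or_lt with rfl | hq1
  · exact hs (by simpa using hM)
  rcases lt_or_ge 4 (a + b) with hab | hab
  · exact not_representable_convexComb_of_four_lt hq0 hq1.le ha hb hc ha' hb' hc' hab hs' hM
  rcases lt_or_ge 4 (a' + b') with hab' | hab'
  · refine not_representable_convexComb_of_four_lt (sub_pos.2 hq1) (by linarith)
      ha' hb' hc' ha hb hc hab' hs ?_
    convert hM using 1 <;> ring
  · exact not_representable_convexComb_of_add_le_four hq0 hq1.le ha hb hc ha' hb' hc' hab hab'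
      hs hs' hM
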